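/- Let r > 0, p ≥ 1, 0 < ε < r, m ∈ ℕ, let E = ℝ^m with the Euclidean inner product, K and E₁ finite-dimensional real inner product spaces, T : E → K and A : E → E₁ linear maps, g ∈ K, f, q ∈ E₁, u ∈ E, γ > 0, and B = p(r−ε)^{p−1}/(2ε) + 3((r−ε)^p − r^p)/(4ε²). Assume ‖T‖ < 1, (1/√2)‖A‖ < 1 (operator norms), and γ|B| < ω < 1. Then v* ∈ E minimizes v ↦ J_{ω,u}(v,q) := ‖Tv − g‖² + γ ∑_{i=1}^m W_r^{p,ε}(v_i) + ω‖v − u‖² + (1/2)‖Av − (f+q)‖² if and only if, for every i = 1, …, m, v*_i = S_p^{γ/3}( (1/3) { [(I − T*T) + (I − (1/2)A*A) + (1 − ω)I] v* + T*g + (1/2)A*(f+q) + ω u }_i ), where S_p^{γ/3}(ξ) is the unique minimizer over ℝ of t ↦ (t−ξ)² + (γ/3) W_r^{p,ε}(t). -/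

import Mathlib

/-!
Expanding the squares around `v*` gives
`J(v) - J(v*) = 3 ∑ᵢ (φᵢ(vᵢ) - φᵢ(v*ᵢ)) - Q(v - v*)`, where `φᵢ(t) = (t - ξᵢ)² + (γ/3) W(t)` is the
cost minimized by `S_p^{γ/3}(ξᵢ)`, `ξ` is the point inside the fixed-point equation, and
`Q(d) = (3 - ω)‖d‖² - ‖Td‖² - ½‖Ad‖²`. The norm bounds give `(1 - ω)‖d‖² ≤ Q(d) ≤ (3 - ω)‖d‖²`.

If `v*` minimizes `J`, replacing one coordinate by `S(ξᵢ)` does not increase `φᵢ`, so the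
coercivity of `Q` forces that coordinate to be unchanged. Conversely, `γ|B| ≤ ω` makes
`t ↦ ωt² + γW(t)` convex: on `[0, ∞)` its derivative is nondecreasing (on the cubic piece
`W'' ≥ 2B` because `A₀ ≤ 0`, which is the tangent-line inequality for `x ↦ x ^ p`), and the even
extension of a convex nondecreasing function is convex. Hence each `φᵢ` is
`(1 - ω/3)`-strongly convex and grows quadratically away from its minimizer; summing, the growth
`(3 - ω)‖v - v*‖²` dominates `Q(v - v*)`.
-/

/-- The smoothed truncated power potential `W_r^{p,ε}`. -/
noncomputable def Wpot (r p ε t : ℝ) : ℝ :=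
  if |t| ≤ r - ε then |t| ^ p
  else if |t| ≤ r + ε then
    (p * (r - ε) ^ (p - 1) / (12 * ε ^ 2) +
        (p * (r - ε) ^ (p - 1) / (2 * ε) +
          3 * ((r - ε) ^ p - r ^ p) / (4 * ε ^ 2)) / (3 * ε)) *
      (|t| - (r + ε)) ^ 3 +
    (p * (r - ε) ^ (p - 1) / (2 * ε) + 3 * ((r - ε) ^ p - r ^ p) / (4 * ε ^ 2)) *
      (|t| - (r + ε)) ^ 2 + r ^ p
  else r ^ p

open Set Filter Topology

theorem Real.rpow_add_mul_rpow_sub_one_le {a h p : ℝ} (hp : 1 ≤ p) (ha : 0 < a) (hh : -a ≤ h) :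
    a ^ p + p * a ^ (p - 1) * h ≤ (a + h) ^ p := by
  have hs : -1 ≤ h / a := by rw [le_div_iff₀ ha]; linarith
  have hscale : (1 + h / a) * a = a + h := by field_simp
  calc a ^ p + p * a ^ (p - 1) * h = (1 + p * (h / a)) * a ^ p := by
        rw [Real.rpow_sub_one ha.ne']; field_simp
    _ ≤ (1 + h / a) ^ p * a ^ p := by gcongr; exact one_add_mul_self_le_rpow_one_add hs hp
    _ = (a + h) ^ p := by rw [← Real.mul_rpow (by linarith) ha.le, hscale]

theorem HasDerivAt.ite_le {f g : ℝ → ℝ} {c x f' g' : ℝ} (hf : HasDerivAt f f' x)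
    (hg : HasDerivAt g g' x) (hfg : f c = g c) (hf'g' : x = c → f' = g') :
    HasDerivAt (fun y => if y ≤ c then f y else g y) (if x ≤ c then f' else g') x := by
  rcases lt_trichotomy x c with hxc | rfl | hcx
  · rw [if_pos hxc.le]
    exact hf.congr_of_eventuallyEq <| by
      filter_upwards [Iio_mem_nhds hxc] with y hy using if_pos (le_of_lt hy)
  · rw [if_pos le_rfl]
    have hleft : HasDerivWithinAt (fun y => if y ≤ x then f y else g y) f' (Iic x) x :=
      hf.hasDerivWithinAt.congr (fun y hy => if_pos hy) (if_pos le_rfl)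
    have hright : HasDerivWithinAt (fun y => if y ≤ x then f y else g y) f' (Ici x) x := by
      refine (hf'g' rfl ▸ hg.hasDerivWithinAt).congr (fun y hy => ?_) (by simp [hfg])
      split_ifs with hyx
      · rw [le_antisymm hyx hy, hfg]
      · rfl
    simpa [Iic_union_Ici] using hleft.union hright
  · rw [if_neg hcx.not_ge]
    exact hg.congr_of_eventuallyEq <| by
      filter_upwards [Ioi_mem_nhds hcx] with y hy using if_neg (not_le.2 hy)

namespace Wpot

/- `coeffB`, `coeffA` and `cubic` are the paper's `B`, `A₀` and `π_p`; `profile` is the potential on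
`[0, ∞)` (`eq_profile_abs`). -/

noncomputable def coeffB (r p ε : ℝ) : ℝ :=
  p * (r - ε) ^ (p - 1) / (2 * ε) + 3 * ((r - ε) ^ p - r ^ p) / (4 * ε ^ 2)

noncomputable def coeffA (r p ε : ℝ) : ℝ :=
  p * (r - ε) ^ (p - 1) / (12 * ε ^ 2) + coeffB r p ε / (3 * ε)

noncomputable def cubic (r p ε x : ℝ) : ℝ :=
  coeffA r p ε * (x - (r + ε)) ^ 3 + coeffB r p ε * (x - (r + ε)) ^ 2 + r ^ p

noncomputable def cubicDeriv (r p ε x : ℝ) : ℝ :=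
  3 * coeffA r p ε * (x - (r + ε)) ^ 2 + 2 * coeffB r p ε * (x - (r + ε))

noncomputable def profile (r p ε x : ℝ) : ℝ :=
  if x ≤ r - ε then x ^ p else if x ≤ r + ε then cubic r p ε x else r ^ p

noncomputable def profileDeriv (r p ε x : ℝ) : ℝ :=
  if x ≤ r - ε then p * x ^ (p - 1) else if x ≤ r + ε then cubicDeriv r p ε x else 0

theorem eq_profile_abs (r p ε t : ℝ) : Wpot r p ε t = profile r p ε |t| := rfl

variable {r p ε : ℝ}

theorem cubic_sub (hε : ε ≠ 0) : cubic r p ε (r - ε) = (r - ε) ^ p := by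
  simp only [cubic, coeffA, coeffB]; field_simp; ring

theorem cubicDeriv_sub (hε : ε ≠ 0) : cubicDeriv r p ε (r - ε) = p * (r - ε) ^ (p - 1) := by
  simp only [cubicDeriv, coeffA]; field_simp; ring

theorem hasDerivAt_cubic (x : ℝ) : HasDerivAt (cubic r p ε) (cubicDeriv r p ε x) x := by
  have hshift : HasDerivAt (fun y : ℝ => y - (r + ε)) 1 x := (hasDerivAt_id x).sub_const _
  refine ((((hshift.pow 3).const_mul (coeffA r p ε)).add
    ((hshift.pow 2).const_mul (coeffB r p ε))).add_const (r ^ p)).congr_deriv ?_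
  simp only [cubicDeriv]
  ring

theorem hasDerivAt_profile (hp : 1 ≤ p) (hε : 0 < ε) (x : ℝ) :
    HasDerivAt (profile r p ε) (profileDeriv r p ε x) x := by
  have hcubic : HasDerivAt (fun y => if y ≤ r + ε then cubic r p ε y else r ^ p)
      (if x ≤ r + ε then cubicDeriv r p ε x else 0) x :=
    (hasDerivAt_cubic x).ite_le (hasDerivAt_const x _) (by simp [cubic])
      (fun hx => by simp [cubicDeriv, hx])
  refine (Real.hasDerivAt_rpow_const (Or.inr hp)).ite_le hcubic ?_ (fun hx => ?_)
  · rw [if_pos (by linarith), cubic_sub hε.ne']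
  · rw [if_pos (by linarith), hx, cubicDeriv_sub hε.ne']

-- `4ε³A₀` is the defect of the tangent-line inequality for `x ↦ x ^ p` at `r - ε`.
theorem coeffA_nonpos (hp : 1 ≤ p) (hε : 0 < ε) (hεr : ε < r) : coeffA r p ε ≤ 0 := by
  have htangent := Real.rpow_add_mul_rpow_sub_one_le hp (sub_pos.2 hεr) (h := ε) (by linarith)
  rw [sub_add_cancel] at htangent
  have hscaled : coeffA r p ε * (4 * ε ^ 3) = (r - ε) ^ p + p * (r - ε) ^ (p - 1) * ε - r ^ p := by
    simp only [coeffA, coeffB]; field_simp; ring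
  exact nonpos_of_mul_nonpos_left (b := 4 * ε ^ 3) (by linarith) (by positivity)

theorem profileDeriv_of_le {x : ℝ} (hx : x ≤ r - ε) : profileDeriv r p ε x = p * x ^ (p - 1) :=
  if_pos hx

theorem profileDeriv_of_mem_Icc (hε : 0 < ε) {x : ℝ} (hx : x ∈ Icc (r - ε) (r + ε)) :
    profileDeriv r p ε x = cubicDeriv r p ε x := by
  rcases hx.1.eq_or_lt with rfl | hlt
  · rw [profileDeriv_of_le le_rfl, cubicDeriv_sub hε.ne']
  · rw [profileDeriv, if_neg hlt.not_ge, if_pos hx.2]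

theorem profileDeriv_of_ge (hε : 0 < ε) {x : ℝ} (hx : r + ε ≤ x) : profileDeriv r p ε x = 0 := by
  rcases hx.eq_or_lt with rfl | hlt
  · rw [profileDeriv_of_mem_Icc hε ⟨by linarith, le_rfl⟩, cubicDeriv]; ring
  · rw [profileDeriv, if_neg (by linarith), if_neg hlt.not_ge]

section Convexity

variable {γ ω : ℝ}

theorem hasDerivAt_mul_sq_add_profile (hp : 1 ≤ p) (hε : 0 < ε) (x : ℝ) :
    HasDerivAt (fun x => ω * x ^ 2 + γ * profile r p ε x)
      (2 * ω * x + γ * profileDeriv r p ε x) x := by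
  refine (((hasDerivAt_pow 2 x).const_mul ω).add
    ((hasDerivAt_profile hp hε x).const_mul γ)).congr_deriv ?_
  ring

theorem monotoneOn_deriv_mul_sq_add_profile (hp : 1 ≤ p) (hε : 0 < ε) (hεr : ε < r)
    (hγ : 0 ≤ γ) (hω : γ * |coeffB r p ε| ≤ ω) :
    MonotoneOn (fun x => 2 * ω * x + γ * profileDeriv r p ε x) (Ici 0) := by
  have hω0 : 0 ≤ ω := le_trans (by positivity) hω
  have hωB : 0 ≤ ω + γ * coeffB r p ε := by
    have := mul_le_mul_of_nonneg_left (neg_abs_le (coeffB r p ε)) hγ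
    linarith
  have hA := coeffA_nonpos hp hε hεr
  have hpower : MonotoneOn (fun x => 2 * ω * x + γ * profileDeriv r p ε x) (Icc 0 (r - ε)) := by
    intro x hx y hy hxy
    simp only [profileDeriv_of_le hx.2, profileDeriv_of_le hy.2]
    have : x ^ (p - 1) ≤ y ^ (p - 1) := Real.rpow_le_rpow hx.1 hxy (by linarith)
    gcongr
  have hcubic : MonotoneOn (fun x => 2 * ω * x + γ * profileDeriv r p ε x)
      (Icc (r - ε) (r + ε)) := by
    intro x hx y hy hxy
    simp only [profileDeriv_of_mem_Icc hε hx, profileDeriv_of_mem_Icc hε hy]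
    have hdiff : (2 * ω * y + γ * cubicDeriv r p ε y) - (2 * ω * x + γ * cubicDeriv r p ε x) =
        2 * (ω + γ * coeffB r p ε) * (y - x) +
          3 * (γ * -coeffA r p ε) * ((r + ε - x) + (r + ε - y)) * (y - x) := by
      simp only [cubicDeriv]; ring
    have hcurv : 0 ≤ 3 * (γ * -coeffA r p ε) * ((r + ε - x) + (r + ε - y)) * (y - x) :=
      mul_nonneg (mul_nonneg (mul_nonneg (by norm_num) (mul_nonneg hγ (neg_nonneg.2 hA)))
        (by linarith [hx.2, hy.2])) (by linarith)
    nlinarith [mul_nonneg hωB (sub_nonneg.2 hxy)]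
  have hconst : MonotoneOn (fun x => 2 * ω * x + γ * profileDeriv r p ε x) (Ici (r + ε)) := by
    intro x hx y hy hxy
    simp only [profileDeriv_of_ge hε hx, profileDeriv_of_ge hε hy]
    gcongr
  have htail := hcubic.union_right hconst (isGreatest_Icc (by linarith)) isLeast_Ici
  rw [Icc_union_Ici_eq_Ici (by linarith)] at htail
  have hall := hpower.union_right htail (isGreatest_Icc (by linarith)) isLeast_Ici
  rwa [Icc_union_Ici_eq_Ici (by linarith)] at hall

theorem convexOn_mul_sq_add_profile (hp : 1 ≤ p) (hε : 0 < ε) (hεr : ε < r)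
    (hγ : 0 ≤ γ) (hω : γ * |coeffB r p ε| ≤ ω) :
    ConvexOn ℝ (Ici 0) (fun x => ω * x ^ 2 + γ * profile r p ε x) := by
  have hderiv := hasDerivAt_mul_sq_add_profile (r := r) (ω := ω) (γ := γ) hp hε
  refine MonotoneOn.convexOn_of_deriv (convex_Ici 0)
    (fun x _ => (hderiv x).continuousAt.continuousWithinAt)
    (fun x _ => (hderiv x).differentiableAt.differentiableWithinAt) ?_
  rw [interior_Ici, funext fun x => (hderiv x).deriv]
  exact (monotoneOn_deriv_mul_sq_add_profile hp hε hεr hγ hω).mono Ioi_subset_Ici_self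

theorem monotoneOn_mul_sq_add_profile (hp : 1 ≤ p) (hε : 0 < ε) (hεr : ε < r)
    (hγ : 0 ≤ γ) (hω : γ * |coeffB r p ε| ≤ ω) :
    MonotoneOn (fun x => ω * x ^ 2 + γ * profile r p ε x) (Ici 0) := by
  have hderiv := hasDerivAt_mul_sq_add_profile (r := r) (ω := ω) (γ := γ) hp hε
  refine monotoneOn_of_deriv_nonneg (convex_Ici 0)
    (fun x _ => (hderiv x).continuousAt.continuousWithinAt)
    (fun x _ => (hderiv x).differentiableAt.differentiableWithinAt) fun x hx => ?_
  rw [interior_Ici] at hx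
  have hzero : 0 ≤ 2 * ω * 0 + γ * profileDeriv r p ε 0 := by
    rw [profileDeriv_of_le (by linarith), mul_zero, zero_add]
    exact mul_nonneg hγ (mul_nonneg (by linarith) (Real.rpow_nonneg le_rfl _))
  rw [(hderiv x).deriv]
  exact hzero.trans <| monotoneOn_deriv_mul_sq_add_profile hp hε hεr hγ hω
    self_mem_Ici (mem_Ici.2 (le_of_lt hx)) (le_of_lt hx)

theorem convexOn_mul_sq_add (hp : 1 ≤ p) (hε : 0 < ε) (hεr : ε < r)
    (hγ : 0 ≤ γ) (hω : γ * |coeffB r p ε| ≤ ω) :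
    ConvexOn ℝ univ (fun t => ω * t ^ 2 + γ * Wpot r p ε t) := by
  have hrange : (norm : ℝ → ℝ) '' univ = Ici 0 := by
    ext x
    exact ⟨fun ⟨t, _, ht⟩ => ht ▸ norm_nonneg t, fun hx => ⟨x, trivial, Real.norm_of_nonneg hx⟩⟩
  have hcomp := ConvexOn.comp (hrange ▸ convexOn_mul_sq_add_profile hp hε hεr hγ hω)
    convexOn_univ_norm (hrange ▸ monotoneOn_mul_sq_add_profile hp hε hεr hγ hω)
  refine hcomp.congr fun t _ => ?_
  simp only [Function.comp, Real.norm_eq_abs, sq_abs, eq_profile_abs]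

end Convexity

end Wpot

-- `S_p^{γ/3}(ξ)` is a minimizer of `thresholdCost γ (Wpot r p ε) ξ`.
noncomputable def thresholdCost (γ : ℝ) (W : ℝ → ℝ) (ξ t : ℝ) : ℝ := (t - ξ) ^ 2 + γ / 3 * W t

theorem add_mul_sq_le_of_isMinOn {f : ℝ → ℝ} {c s : ℝ}
    (hf : ConvexOn ℝ univ fun x => f x - c * x ^ 2) (hs : IsMinOn f univ s) (t : ℝ) :
    f s + c * (t - s) ^ 2 ≤ f t := by
  have hslope : ∀ l ∈ Ioc (0 : ℝ) 1,
      f s - c * s ^ 2 - (f t - c * t ^ 2) - 2 * c * s * (t - s) ≤ c * (t - s) ^ 2 * l := by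
    rintro l ⟨hl0, hl1⟩
    have hconv := hf.2 (mem_univ s) (mem_univ t) (sub_nonneg.2 hl1) hl0.le (by ring)
    have hmin : f s ≤ f ((1 - l) * s + l * t) := hs (mem_univ _)
    simp only [smul_eq_mul] at hconv
    have hscaled : l * (f s - c * s ^ 2 - (f t - c * t ^ 2) - 2 * c * s * (t - s)
        - c * (t - s) ^ 2 * l) ≤ 0 := by
      linear_combination hmin + hconv
    linarith [nonpos_of_mul_nonpos_right hscaled hl0]
  have hlim : Tendsto (fun l : ℝ => c * (t - s) ^ 2 * l) (𝓝[>] 0) (𝓝 0) := by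
    simpa using ((continuous_const_mul (c * (t - s) ^ 2)).tendsto 0).mono_left nhdsWithin_le_nhds
  have := ge_of_tendsto hlim <| by
    filter_upwards [Ioc_mem_nhdsGT zero_lt_one] with l hl using hslope l hl
  linarith

theorem thresholdCost_add_le {γ ω : ℝ} {W : ℝ → ℝ} {ξ s : ℝ}
    (hW : ConvexOn ℝ univ fun t => ω * t ^ 2 + γ * W t)
    (hs : IsMinOn (thresholdCost γ W ξ) univ s) (t : ℝ) :
    thresholdCost γ W ξ s + (1 - ω / 3) * (t - s) ^ 2 ≤ thresholdCost γ W ξ t := by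
  refine add_mul_sq_le_of_isMinOn ?_ hs t
  have hlin := ((-(2 * ξ)) • LinearMap.id : ℝ →ₗ[ℝ] ℝ).convexOn convex_univ
  refine (((hW.smul (by norm_num : (0 : ℝ) ≤ 1 / 3)).add hlin).add_const (ξ ^ 2)).congr
    fun x _ => ?_
  simp only [Pi.add_apply, thresholdCost, smul_eq_mul, LinearMap.smul_apply, LinearMap.id_apply]
  ring

section Surrogate

open ContinuousLinearMap (adjoint)
open scoped RealInnerProductSpace

variable {E K E₁ : Type*} [NormedAddCommGroup E] [InnerProductSpace ℝ E]
  [NormedAddCommGroup K] [InnerProductSpace ℝ K] [NormedAddCommGroup E₁] [InnerProductSpace ℝ E₁]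
  (T : E →L[ℝ] K) (A : E →L[ℝ] E₁) (g : K) (h : E₁) (u : E) (ω : ℝ)

noncomputable def surrogateGap (d : E) : ℝ :=
  (3 - ω) * ‖d‖ ^ 2 - ‖T d‖ ^ 2 - 1 / 2 * ‖A d‖ ^ 2

theorem mul_norm_sq_le_surrogateGap (hT : ‖T‖ ≤ 1) (hA : ‖A‖ ≤ √2) (d : E) :
    (1 - ω) * ‖d‖ ^ 2 ≤ surrogateGap T A ω d := by
  have hTd : ‖T d‖ ^ 2 ≤ ‖d‖ ^ 2 := by
    gcongr
    simpa using T.le_of_opNorm_le hT d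
  have hAd : ‖A d‖ ^ 2 ≤ 2 * ‖d‖ ^ 2 := by
    calc ‖A d‖ ^ 2 ≤ (√2 * ‖d‖) ^ 2 := by gcongr; exact A.le_of_opNorm_le hA d
      _ = 2 * ‖d‖ ^ 2 := by rw [mul_pow, Real.sq_sqrt zero_le_two]
  rw [surrogateGap]
  linarith

variable [CompleteSpace E] [CompleteSpace K] [CompleteSpace E₁]

noncomputable def surrogatePoint (w : E) : E :=
  (3 : ℝ)⁻¹ • ((w - adjoint T (T w)) + (w - (2 : ℝ)⁻¹ • adjoint A (A w)) + (1 - ω) • w +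
    adjoint T g + (2 : ℝ)⁻¹ • adjoint A h + ω • u)

-- Half the gradient of `v ↦ ‖T v - g‖² + ω ‖v - u‖² + ½ ‖A v - h‖²` at `w`.
theorem three_smul_sub_surrogatePoint (w : E) :
    (3 : ℝ) • (w - surrogatePoint T A g h u ω w) =
      adjoint T (T w - g) + ω • (w - u) + (2 : ℝ)⁻¹ • adjoint A (A w - h) := by
  simp only [surrogatePoint, map_sub]
  module

theorem norm_sq_add_surrogateGap (v w : E) :
    ‖T v - g‖ ^ 2 + ω * ‖v - u‖ ^ 2 + 1 / 2 * ‖A v - h‖ ^ 2 + surrogateGap T A ω (v - w) =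
      ‖T w - g‖ ^ 2 + ω * ‖w - u‖ ^ 2 + 1 / 2 * ‖A w - h‖ ^ 2 +
        3 * (‖v - surrogatePoint T A g h u ω w‖ ^ 2 - ‖w - surrogatePoint T A g h u ω w‖ ^ 2) := by
  set ξ := surrogatePoint T A g h u ω w
  set d := v - w
  have hgrad : 3 * ⟪w - ξ, d⟫ = ⟪T w - g, T d⟫ + ω * ⟪w - u, d⟫ + 2⁻¹ * ⟪A w - h, A d⟫ := by
    rw [← real_inner_smul_left, three_smul_sub_surrogatePoint]
    simp only [inner_add_left, real_inner_smul_left, ContinuousLinearMap.adjoint_inner_left]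
  have hT : T v - g = (T w - g) + T d := by simp only [d, map_sub]; abel
  have hA : A v - h = (A w - h) + A d := by simp only [d, map_sub]; abel
  have hu : v - u = (w - u) + d := by simp only [d]; abel
  have hξ : v - ξ = (w - ξ) + d := by simp only [d]; abel
  rw [hT, hA, hu, hξ, norm_add_sq_real, norm_add_sq_real, norm_add_sq_real, norm_add_sq_real,
    surrogateGap]
  linarith

end Surrogate

section Separable

variable {ι K E₁ : Type*} [Fintype ι]
  [NormedAddCommGroup K] [InnerProductSpace ℝ K] [CompleteSpace K]
  [NormedAddCommGroup E₁] [InnerProductSpace ℝ E₁] [CompleteSpace E₁]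
  {T : EuclideanSpace ℝ ι →L[ℝ] K} {A : EuclideanSpace ℝ ι →L[ℝ] E₁} {g : K} {h : E₁}
  {u : EuclideanSpace ℝ ι} {γ ω : ℝ} {W : ℝ → ℝ}

variable (T A g h u γ ω W) in
noncomputable def objective (v : EuclideanSpace ℝ ι) : ℝ :=
  ‖T v - g‖ ^ 2 + γ * ∑ i, W (v i) + ω * ‖v - u‖ ^ 2 + 1 / 2 * ‖A v - h‖ ^ 2

variable (T A g h u γ ω W) in
theorem objective_sub_objective (v w : EuclideanSpace ℝ ι) :
    objective T A g h u γ ω W v - objective T A g h u γ ω W w =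
      3 * ∑ i, (thresholdCost γ W (surrogatePoint T A g h u ω w i) (v i) -
        thresholdCost γ W (surrogatePoint T A g h u ω w i) (w i)) -
        surrogateGap T A ω (v - w) := by
  have hid := norm_sq_add_surrogateGap T A g h u ω v w
  simp only [objective, thresholdCost, EuclideanSpace.real_norm_sq_eq, PiLp.sub_apply,
    Finset.sum_sub_distrib, Finset.sum_add_distrib, ← Finset.mul_sum] at hid ⊢
  linarith

theorem apply_eq_of_isMinOn (hT : ‖T‖ ≤ 1) (hA : ‖A‖ ≤ √2) (hω : ω < 1) {S : ℝ → ℝ}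
    (hS : ∀ ξ s, thresholdCost γ W ξ (S ξ) ≤ thresholdCost γ W ξ s) {vstar : EuclideanSpace ℝ ι}
    (hmin : IsMinOn (objective T A g h u γ ω W) univ vstar) (i : ι) :
    vstar i = S (surrogatePoint T A g h u ω vstar i) := by
  classical
  set ξ := surrogatePoint T A g h u ω vstar with hξ
  set δ := S (ξ i) - vstar i
  have hdiff := objective_sub_objective T A g h u γ ω W (vstar + EuclideanSpace.single i δ) vstar
  rw [← hξ, add_sub_cancel_left,
    Finset.sum_eq_single i (fun j _ hj => by simp [hj]) (by simp)] at hdiff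
  simp only [PiLp.add_apply, PiLp.single_apply, ↓reduceIte, δ, add_sub_cancel] at hdiff
  have hgap := mul_norm_sq_le_surrogateGap T A ω hT hA (EuclideanSpace.single i δ)
  rw [PiLp.norm_single, Real.norm_eq_abs, sq_abs] at hgap
  have hle : objective T A g h u γ ω W vstar ≤ _ := hmin (mem_univ (vstar + .single i δ))
  have hSi := hS (ξ i) (vstar i)
  have hδ : δ ^ 2 ≤ 0 := nonpos_of_mul_nonpos_right (by linarith) (sub_pos.2 hω)
  exact (sub_eq_zero.1 (pow_eq_zero_iff two_ne_zero |>.1 (le_antisymm hδ (sq_nonneg δ)))).symm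

theorem isMinOn_of_apply_eq (hW : ConvexOn ℝ univ fun t => ω * t ^ 2 + γ * W t) {S : ℝ → ℝ}
    (hS : ∀ ξ s, thresholdCost γ W ξ (S ξ) ≤ thresholdCost γ W ξ s) {vstar : EuclideanSpace ℝ ι}
    (hfix : ∀ i, vstar i = S (surrogatePoint T A g h u ω vstar i)) :
    IsMinOn (objective T A g h u γ ω W) univ vstar := by
  intro v _
  show objective T A g h u γ ω W vstar ≤ objective T A g h u γ ω W v
  set ξ := surrogatePoint T A g h u ω vstar with hξ
  have hcost : ∀ i, (1 - ω / 3) * (v i - vstar i) ^ 2 ≤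
      thresholdCost γ W (ξ i) (v i) - thresholdCost γ W (ξ i) (vstar i) := fun i => by
    have := thresholdCost_add_le hW (s := vstar i) (fun t _ => hfix i ▸ hS (ξ i) t) (v i)
    linarith
  have hsum := Finset.sum_le_sum fun i (_ : i ∈ Finset.univ) => hcost i
  rw [← Finset.mul_sum] at hsum
  have hdiff := objective_sub_objective T A g h u γ ω W v vstar
  rw [← hξ] at hdiff
  have hnorm := EuclideanSpace.real_norm_sq_eq (v - vstar)
  simp only [PiLp.sub_apply] at hnorm
  rw [surrogateGap, hnorm] at hdiff
  linarith [sq_nonneg ‖T (v - vstar)‖, sq_nonneg ‖A (v - vstar)‖]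

end Separable

theorem statement17_general (r p ε : ℝ) (hp : 1 ≤ p) (hε0 : 0 < ε) (hεr : ε < r)
    (m : ℕ) {K E₁ : Type*}
    [NormedAddCommGroup K] [InnerProductSpace ℝ K] [FiniteDimensional ℝ K]
    [NormedAddCommGroup E₁] [InnerProductSpace ℝ E₁] [FiniteDimensional ℝ E₁]
    (T : EuclideanSpace ℝ (Fin m) →L[ℝ] K) (A : EuclideanSpace ℝ (Fin m) →L[ℝ] E₁)
    (g : K) (f q : E₁) (u : EuclideanSpace ℝ (Fin m)) (γ ω : ℝ) (hγ : 0 < γ)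
    (hT : ‖T‖ < 1) (hAn : 1 / Real.sqrt 2 * ‖A‖ < 1)
    (hωl : γ * |p * (r - ε) ^ (p - 1) / (2 * ε) +
        3 * ((r - ε) ^ p - r ^ p) / (4 * ε ^ 2)| < ω)
    (hωu : ω < 1)
    (S : ℝ → ℝ)
    (hS : ∀ ξ s : ℝ, (S ξ - ξ) ^ 2 + γ / 3 * Wpot r p ε (S ξ) ≤
      (s - ξ) ^ 2 + γ / 3 * Wpot r p ε s)
    (vstar : EuclideanSpace ℝ (Fin m)) :
    (∀ v : EuclideanSpace ℝ (Fin m),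
        ‖T vstar - g‖ ^ 2 + γ * ∑ i, Wpot r p ε (vstar i) + ω * ‖vstar - u‖ ^ 2 +
            1 / 2 * ‖A vstar - (f + q)‖ ^ 2 ≤
          ‖T v - g‖ ^ 2 + γ * ∑ i, Wpot r p ε (v i) + ω * ‖v - u‖ ^ 2 +
            1 / 2 * ‖A v - (f + q)‖ ^ 2) ↔
      ∀ i : Fin m, vstar i = S ((3 : ℝ)⁻¹ *
        (((vstar - (ContinuousLinearMap.adjoint T) (T vstar)) +
            (vstar - (2 : ℝ)⁻¹ • (ContinuousLinearMap.adjoint A) (A vstar)) +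
            (1 - ω) • vstar +
            (ContinuousLinearMap.adjoint T) g +
            (2 : ℝ)⁻¹ • (ContinuousLinearMap.adjoint A) (f + q) + ω • u) i)) := by
  have hW : ConvexOn ℝ univ fun t => ω * t ^ 2 + γ * Wpot r p ε t :=
    Wpot.convexOn_mul_sq_add hp hε0 hεr hγ.le hωl.le
  have hA : ‖A‖ ≤ √2 := by
    rw [one_div, inv_mul_lt_iff₀ (Real.sqrt_pos.2 two_pos), mul_one] at hAn
    exact hAn.le
  exact ⟨fun hmin => apply_eq_of_isMinOn hT.le hA hωu hS (isMinOn_univ_iff.2 hmin),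
    fun hfix => isMinOn_univ_iff.1 (isMinOn_of_apply_eq hW hS hfix)⟩

/-- Fixed-point characterization of the minimizer of
`J_{ω,u}(v,q) = ‖Tv − g‖² + γ ∑ᵢ W_r^{p,ε}(vᵢ) + ω‖v − u‖² + ½‖Av − (f+q)‖²` via the
thresholding function `S_p^{γ/3}` applied componentwise to
`(1/3){[(I − T*T) + (I − ½A*A) + (1 − ω)I]v* + T*g + ½A*(f+q) + ωu}`. -/
theorem statement17 (r p ε : ℝ) (hr : 0 < r) (hp : 1 ≤ p) (hε0 : 0 < ε) (hεr : ε < r)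
    (m : ℕ) {K E₁ : Type*}
    [NormedAddCommGroup K] [InnerProductSpace ℝ K] [FiniteDimensional ℝ K]
    [NormedAddCommGroup E₁] [InnerProductSpace ℝ E₁] [FiniteDimensional ℝ E₁]
    (T : EuclideanSpace ℝ (Fin m) →L[ℝ] K) (A : EuclideanSpace ℝ (Fin m) →L[ℝ] E₁)
    (g : K) (f q : E₁) (u : EuclideanSpace ℝ (Fin m)) (γ ω : ℝ) (hγ : 0 < γ)
    (hT : ‖T‖ < 1) (hAn : 1 / Real.sqrt 2 * ‖A‖ < 1)
    (hωl : γ * |p * (r - ε) ^ (p - 1) / (2 * ε) +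
        3 * ((r - ε) ^ p - r ^ p) / (4 * ε ^ 2)| < ω)
    (hωu : ω < 1)
    (S : ℝ → ℝ)
    (hS : ∀ ξ s : ℝ, (S ξ - ξ) ^ 2 + γ / 3 * Wpot r p ε (S ξ) ≤
      (s - ξ) ^ 2 + γ / 3 * Wpot r p ε s)
    (vstar : EuclideanSpace ℝ (Fin m)) :
    (∀ v : EuclideanSpace ℝ (Fin m),
        ‖T vstar - g‖ ^ 2 + γ * ∑ i, Wpot r p ε (vstar i) + ω * ‖vstar - u‖ ^ 2 +
            1 / 2 * ‖A vstar - (f + q)‖ ^ 2 ≤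
          ‖T v - g‖ ^ 2 + γ * ∑ i, Wpot r p ε (v i) + ω * ‖v - u‖ ^ 2 +
            1 / 2 * ‖A v - (f + q)‖ ^ 2) ↔
      ∀ i : Fin m, vstar i = S ((3 : ℝ)⁻¹ *
        (((vstar - (ContinuousLinearMap.adjoint T) (T vstar)) +
            (vstar - (2 : ℝ)⁻¹ • (ContinuousLinearMap.adjoint A) (A vstar)) +
            (1 - ω) • vstar +
            (ContinuousLinearMap.adjoint T) g +
            (2 : ℝ)⁻¹ • (ContinuousLinearMap.adjoint A) (f + q) + ω • u) i)) :=
  statement17_general r p ε hp hε0 hεr m T A g f q u γ ω hγ hT hAn hωl hωu S hS vstar
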